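/- arXiv:1507.01782 — 3 statements merged into one kernel-verified Lean document; each statement's English description precedes it below -/
import Mathlib

section
/- For any real λ > 4, the symmetric 3×3 real matrix with rows ((12λ−45)λ(λ−4), −12λ(λ−4), 0), (−12λ(λ−4), 2λ²+(25/2)λ, 20λ), (0, 20λ, 20λ+245) is positive definite, and for λ = 0 it is positive semidefinite. -/
/-!
Sylvester's criterion for a symmetric `3 × 3` matrix comes from completing squares: with leading
minors `m₁ = a`, `m₂ = a b - d²`, `m₃ = det`, the quadratic form times `m₁ m₂` is
`m₂ (a x + d y + f z)² + (m₂ y + (a e - d f) z)² + m₁ m₃ z²`.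
Writing `λ = 4 + t`, each leading minor of the matrix is a polynomial in `t` with positive
coefficients.
-/

namespace Matrix

lemma isHermitian_fin_three_symm (a b c d e f : ℝ) :
    (!![a, d, f; d, b, e; f, e, c] : Matrix (Fin 3) (Fin 3) ℝ).IsHermitian := by
  ext i j
  fin_cases i <;> fin_cases j <;> rfl

lemma dotProduct_mulVec_fin_three_symm (a b c d e f : ℝ) (x : Fin 3 → ℝ) :
    star x ⬝ᵥ (!![a, d, f; d, b, e; f, e, c] *ᵥ x) =
      a * x 0 ^ 2 + b * x 1 ^ 2 + c * x 2 ^ 2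
        + 2 * d * x 0 * x 1 + 2 * f * x 0 * x 2 + 2 * e * x 1 * x 2 := by
  simp only [dotProduct, Pi.star_apply, star_trivial, mulVec, of_apply, cons_val',
    cons_val_fin_one, Fin.sum_univ_three, cons_val_zero, cons_val_one, cons_val]
  ring

lemma mul_quadratic_form_fin_three_eq_sum_sq (a b c d e f x y z : ℝ) :
    a * (a * b - d ^ 2) *
        (a * x ^ 2 + b * y ^ 2 + c * z ^ 2 + 2 * d * x * y + 2 * f * x * z + 2 * e * y * z) =
      (a * b - d ^ 2) * (a * x + d * y + f * z) ^ 2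
        + ((a * b - d ^ 2) * y + (a * e - d * f) * z) ^ 2
        + a * (!![a, d, f; d, b, e; f, e, c] : Matrix (Fin 3) (Fin 3) ℝ).det * z ^ 2 := by
  simp only [det_fin_three, of_apply, cons_val', cons_val_zero, cons_val_fin_one, cons_val_one,
    cons_val]
  ring

theorem posDef_fin_three_of_minors_pos {a b c d e f : ℝ} (h₁ : 0 < a) (h₂ : 0 < a * b - d ^ 2)
    (h₃ : 0 < (!![a, d, f; d, b, e; f, e, c] : Matrix (Fin 3) (Fin 3) ℝ).det) :
    (!![a, d, f; d, b, e; f, e, c] : Matrix (Fin 3) (Fin 3) ℝ).PosDef := by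
  refine posDef_iff_dotProduct_mulVec.2 ⟨isHermitian_fin_three_symm .., fun x hx ↦ ?_⟩
  rw [dotProduct_mulVec_fin_three_symm]
  refine pos_of_mul_pos_right ?_ (mul_pos h₁ h₂).le
  rw [mul_quadratic_form_fin_three_eq_sum_sq]
  by_cases hz : x 2 = 0
  · by_cases hy : x 1 = 0
    · have hx₀ : x 0 ≠ 0 := fun h ↦ hx (funext fun i ↦ by fin_cases i <;> assumption)
      have : 0 < (a * b - d ^ 2) * (a * x 0 + d * x 1 + f * x 2) ^ 2 := by
        simp only [hy, hz, mul_zero, add_zero]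
        positivity
      positivity
    · have : 0 < ((a * b - d ^ 2) * x 1 + (a * e - d * f) * x 2) ^ 2 := by
        simp only [hz, mul_zero, add_zero]
        positivity
      positivity
  · positivity

end Matrix

open Matrix in
theorem stmt_12 :
    (∀ l : ℝ, 4 < l →
      (!![(12*l-45)*l*(l-4), -12*l*(l-4), 0;
         -12*l*(l-4), 2*l^2+(25/2)*l, 20*l;
         0, 20*l, 20*l+245] : Matrix (Fin 3) (Fin 3) ℝ).PosDef) ∧
    (!![(12*(0:ℝ)-45)*0*(0-4), -12*0*(0-4), 0;
       -12*0*(0-4), 2*0^2+(25/2)*0, 20*0;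
       0, 20*0, 20*0+245] : Matrix (Fin 3) (Fin 3) ℝ).PosSemidef := by
  constructor
  · intro l hl
    obtain ⟨t, ht, rfl⟩ : ∃ t, 0 < t ∧ l = 4 + t := ⟨l - 4, by linarith, by ring⟩
    apply posDef_fin_three_of_minors_pos
    · ring_nf
      positivity
    · ring_nf
      positivity
    · simp only [det_fin_three, of_apply, cons_val', cons_val_zero, cons_val_fin_one,
        cons_val_one, cons_val]
      ring_nf
      positivity
  · have : !![(12*(0:ℝ)-45)*0*(0-4), -12*0*(0-4), 0;
        -12*0*(0-4), 2*0^2+(25/2)*0, 20*0;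
        0, 20*0, 20*0+245] = diagonal ![0, 0, 245] := by
      ext i j
      fin_cases i <;> fin_cases j <;> norm_num
    rw [this, posSemidef_diagonal_iff]
    intro i
    fin_cases i <;> norm_num
end

section
/- For every integer n ≥ 4, every μ ≥ 0, and all smooth compactly supported functions φ, ψ on ℝ, one has [(n²/8)μ ∫_ℝ φ² e^{nr} dr + (1/2)μ² ∫_ℝ φ² e^{(n−2)r} dr] + [2μ ∫_ℝ ψ² e^{(n−2)r} dr + (2(n+1) + n²/2) ∫_ℝ ψ² e^{nr} dr] − 4μ ∫_ℝ |φψ| e^{(n−1)r} dr ≥ (n²/4)·[(μ/2) ∫_ℝ φ² e^{nr} dr + 2 ∫_ℝ ψ² e^{nr} dr]. -/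
open MeasureTheory Real

private lemma aux_cexp (c : ℝ) : Continuous (fun r : ℝ => Real.exp (c * r)) :=
  Real.continuous_exp.comp (continuous_const.mul continuous_id)

private lemma aux_int (f g : ℝ → ℝ) (hf : Continuous f) (hfc : HasCompactSupport f)
    (hg : Continuous g) (c : ℝ) :
    Integrable (fun r => f r * (g r * Real.exp (c * r))) :=
  (hf.mul (hg.mul (aux_cexp c))).integrable_of_hasCompactSupport hfc.mul_right

private lemma aux_int_sq (f : ℝ → ℝ) (hf : Continuous f) (hfc : HasCompactSupport f)
    (c : ℝ) : Integrable (fun r => (f r)^2 * Real.exp (c * r)) := by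
  have h : (fun r => (f r)^2 * Real.exp (c * r))
      = fun r => f r * (f r * Real.exp (c * r)) := by funext r; ring
  rw [h]; exact aux_int f f hf hfc hf c

private lemma aux_int_abs (f g : ℝ → ℝ) (hf : Continuous f) (hfc : HasCompactSupport f)
    (hg : Continuous g) (c : ℝ) :
    Integrable (fun r => |f r * g r| * Real.exp (c * r)) := by
  have hcs : HasCompactSupport (fun r => |f r * g r|) :=
    (hfc.mul_right (f' := g)).abs
  exact (((hf.mul hg).abs).mul (aux_cexp c)).integrable_of_hasCompactSupport hcs.mul_right

theorem stmt_16 (n : ℕ) (hn : 4 ≤ n) (μ : ℝ) (hμ : 0 ≤ μ)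
    (φ ψ : ℝ → ℝ) (hφ : ContDiff ℝ (⊤ : ℕ∞) φ) (hφc : HasCompactSupport φ)
    (hψ : ContDiff ℝ (⊤ : ℕ∞) ψ) (hψc : HasCompactSupport ψ) :
    (((n:ℝ)^2/8) * μ * (∫ r : ℝ, (φ r)^2 * Real.exp (n * r)) +
        (1/2) * μ^2 * (∫ r : ℝ, (φ r)^2 * Real.exp (((n:ℝ)-2) * r))) +
      (2 * μ * (∫ r : ℝ, (ψ r)^2 * Real.exp (((n:ℝ)-2) * r)) +
        (2*((n:ℝ)+1) + (n:ℝ)^2/2) * (∫ r : ℝ, (ψ r)^2 * Real.exp (n * r))) -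
      4 * μ * (∫ r : ℝ, |φ r * ψ r| * Real.exp (((n:ℝ)-1) * r)) ≥
    ((n:ℝ)^2/4) * ((μ/2) * (∫ r : ℝ, (φ r)^2 * Real.exp (n * r)) +
      2 * (∫ r : ℝ, (ψ r)^2 * Real.exp (n * r))) := by
  have hφcont := hφ.continuous
  have hψcont := hψ.continuous
  have hIB := aux_int_sq φ hφcont hφc ((n:ℝ)-2)
  have hID := aux_int_sq ψ hψcont hψc (n:ℝ)
  have hIE := aux_int_abs φ ψ hφcont hφc hψcont ((n:ℝ)-1)
  have hCnn : 0 ≤ ∫ r : ℝ, (ψ r)^2 * Real.exp (((n:ℝ)-2) * r) :=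
    integral_nonneg fun r => by positivity
  have hDnn : 0 ≤ ∫ r : ℝ, (ψ r)^2 * Real.exp ((n:ℝ) * r) :=
    integral_nonneg fun r => by positivity
  -- pointwise Young inequality
  have hpt : ∀ r : ℝ, 4 * μ * (|φ r * ψ r| * Real.exp (((n:ℝ)-1) * r)) ≤
      (1/2) * μ^2 * ((φ r)^2 * Real.exp (((n:ℝ)-2) * r))
        + 8 * ((ψ r)^2 * Real.exp ((n:ℝ) * r)) := by
    intro r
    have ha : Real.exp (((n:ℝ)-2) * r) = (Real.exp ((((n:ℝ)-2)/2) * r))^2 := by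
      rw [← Real.exp_nat_mul]; ring_nf
    have hb : Real.exp ((n:ℝ) * r) = (Real.exp (((n:ℝ)/2) * r))^2 := by
      rw [← Real.exp_nat_mul]; ring_nf
    have hc : Real.exp (((n:ℝ)-1) * r)
        = Real.exp ((((n:ℝ)-2)/2) * r) * Real.exp (((n:ℝ)/2) * r) := by
      rw [← Real.exp_add]; ring_nf
    have h1 : |φ r * ψ r| = |φ r| * |ψ r| := abs_mul _ _
    have h2 : (φ r)^2 = |φ r|^2 := (sq_abs _).symm
    have h3 : (ψ r)^2 = |ψ r|^2 := (sq_abs _).symm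
    rw [ha, hb, hc, h1, h2, h3]
    nlinarith [sq_nonneg (μ * (|φ r| * Real.exp ((((n:ℝ)-2)/2) * r))
        - 4 * (|ψ r| * Real.exp (((n:ℝ)/2) * r))),
      abs_nonneg (φ r), abs_nonneg (ψ r),
      Real.exp_pos ((((n:ℝ)-2)/2) * r), Real.exp_pos (((n:ℝ)/2) * r), hμ]
  have key : 4 * μ * (∫ r : ℝ, |φ r * ψ r| * Real.exp (((n:ℝ)-1) * r)) ≤
      (1/2) * μ^2 * (∫ r : ℝ, (φ r)^2 * Real.exp (((n:ℝ)-2) * r))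
        + 8 * (∫ r : ℝ, (ψ r)^2 * Real.exp ((n:ℝ) * r)) := by
    rw [← integral_const_mul, ← integral_const_mul, ← integral_const_mul,
      ← integral_add (hIB.const_mul _) (hID.const_mul _)]
    exact integral_mono (hIE.const_mul _)
      ((hIB.const_mul _).add (hID.const_mul _)) hpt
  have hn' : (4:ℝ) ≤ (n:ℝ) := by exact_mod_cast hn
  nlinarith [key, hCnn, hDnn, hμ, hn']
end

section
/- For every integer n ≥ 2 and all smooth compactly supported functions φ on (0,∞), ∫_0^∞ φ'(r)² sinh(r)^n dr + κ ∫_0^∞ φ(r)² sinh(r)^{n-2} dr ≥ ((n-1)²/4) ∫_0^∞ φ(r)² sinh(r)^n dr + (κ + (n-1)²/4) ∫_0^∞ φ(r)² sinh(r)^{n-2} dr, for every real κ; in particular, if κ ≥ −(n−1)²/4 then ∫_0^∞ φ'² sinh^n dr + κ ∫_0^∞ φ² sinh^{n-2} dr ≥ ((n-1)²/4)·∫_0^∞ φ² sinh^n dr. -/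
open MeasureTheory Real Set

lemma aux_key (m : ℕ) (φ : ℝ → ℝ) (hφ : ContDiff ℝ (⊤ : ℕ∞) φ)
    (hφc : HasCompactSupport φ) (hφs : tsupport φ ⊆ Ioi 0) :
    (∫ r in Ioi (0:ℝ), (deriv φ r)^2 * (Real.sinh r)^(m+2)) ≥
      ((m:ℝ)+1)/2 * (∫ r in Ioi (0:ℝ), (φ r)^2 * (Real.sinh r)^(m+2)) +
      (((m:ℝ)+1)/2)^2 * ((∫ r in Ioi (0:ℝ), (φ r)^2 * (Real.sinh r)^(m+2)) +
        (∫ r in Ioi (0:ℝ), (φ r)^2 * (Real.sinh r)^m)) := by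
  set a : ℝ := ((m:ℝ)+1)/2 with ha
  have hφd : Differentiable ℝ φ := hφ.differentiable (by simp)
  have hφ' : Continuous (deriv φ) := hφ.continuous_deriv (by simp)
  -- integrability helper
  have hInt : ∀ f : ℝ → ℝ, Continuous f → (∀ x, x ∉ tsupport φ → f x = 0) →
      IntegrableOn f (Ioi 0) := by
    intro f hf hs
    refine (hf.integrable_of_hasCompactSupport (hφc.mono' ?_)).integrableOn
    intro x hx
    by_contra hxx
    exact hx (hs x hxx)
  have hzero : ∀ x, x ∉ tsupport φ → φ x = 0 := fun x hx =>
    image_eq_zero_of_notMem_tsupport hx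
  have hzero' : ∀ x, x ∉ tsupport φ → deriv φ x = 0 := by
    intro x hx
    by_contra h
    exact hx (support_deriv_subset (by simpa using h))
  have hIntD : IntegrableOn (fun r => (deriv φ r)^2 * (Real.sinh r)^(m+2)) (Ioi 0) :=
    hInt _ (by fun_prop) (fun x hx => by rw [hzero' x hx]; ring)
  have hIntS : IntegrableOn (fun r => (φ r)^2 * (Real.sinh r)^(m+2)) (Ioi 0) :=
    hInt _ (by fun_prop) (fun x hx => by rw [hzero x hx]; ring)
  have hIntC2 : IntegrableOn (fun r => (φ r)^2 * (Real.sinh r)^m) (Ioi 0) :=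
    hInt _ (by fun_prop) (fun x hx => by rw [hzero x hx]; ring)
  have hIntC : IntegrableOn (fun r => (φ r)^2 * Real.cosh r^2 * (Real.sinh r)^m) (Ioi 0) :=
    hInt _ (by fun_prop) (fun x hx => by rw [hzero x hx]; ring)
  have hIntI : IntegrableOn
      (fun r => φ r * deriv φ r * Real.cosh r * (Real.sinh r)^(m+1)) (Ioi 0) :=
    hInt _ (by fun_prop) (fun x hx => by rw [hzero x hx]; ring)
  have split3 : ∀ f g h : ℝ → ℝ, IntegrableOn f (Ioi 0) → IntegrableOn g (Ioi 0) →
      IntegrableOn h (Ioi 0) →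
      (∫ r in Ioi (0:ℝ), (f r + (g r + h r))) =
        (∫ r in Ioi (0:ℝ), f r) + ((∫ r in Ioi (0:ℝ), g r) + (∫ r in Ioi (0:ℝ), h r)) := by
    intro f g h hf hg hh
    have hgh : IntegrableOn (fun r => g r + h r) (Ioi 0) := hg.add hh
    rw [integral_add hf hgh, integral_add hg hh]
  set D := ∫ r in Ioi (0:ℝ), (deriv φ r)^2 * (Real.sinh r)^(m+2) with hD
  set S := ∫ r in Ioi (0:ℝ), (φ r)^2 * (Real.sinh r)^(m+2) with hS
  set C2 := ∫ r in Ioi (0:ℝ), (φ r)^2 * (Real.sinh r)^m with hC2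
  set C := ∫ r in Ioi (0:ℝ), (φ r)^2 * Real.cosh r^2 * (Real.sinh r)^m with hC
  set I := ∫ r in Ioi (0:ℝ), φ r * deriv φ r * Real.cosh r * (Real.sinh r)^(m+1) with hI
  -- C = S + C2
  have hCeq : C = S + C2 := by
    rw [hC, hS, hC2, ← integral_add hIntS hIntC2]
    apply setIntegral_congr_fun measurableSet_Ioi
    intro r _
    simp only
    linear_combination ((φ r)^2 * Real.sinh r ^ m) * Real.cosh_sq r
  -- integration by parts : 2 I + S + (m+1) C = 0
  have hIBP : 2 * I + S + ((m:ℝ)+1) * C = 0 := by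
    set F : ℝ → ℝ := fun r => (φ r)^2 * (Real.cosh r * Real.sinh r^(m+1)) with hF
    have hF1 : ContDiff ℝ 1 F :=
      ((hφ.of_le (by simp)).pow 2).mul (Real.contDiff_cosh.mul (Real.contDiff_sinh.pow (m+1)))
    have hFc : HasCompactSupport F := by
      apply hφc.mono'
      intro x hx
      by_contra hxx
      exact hx (show F x = 0 by simp only [hF]; rw [hzero x hxx]; ring)
    have hF0 : F 0 = 0 := by
      have : φ 0 = 0 := hzero 0 (fun h => (lt_irrefl (0:ℝ)) (hφs h))
      simp [hF, this]
    have hd : ∀ r, deriv F r =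
        2 * (φ r * deriv φ r * Real.cosh r * Real.sinh r^(m+1)) +
        ((φ r)^2 * Real.sinh r^(m+2) + ((m:ℝ)+1) * ((φ r)^2 * Real.cosh r^2 * Real.sinh r^m)) := by
      intro r
      have h1 : HasDerivAt φ (deriv φ r) r := (hφd r).hasDerivAt
      have h2 : HasDerivAt Real.cosh (Real.sinh r) r := Real.hasDerivAt_cosh r
      have h3 : HasDerivAt Real.sinh (Real.cosh r) r := Real.hasDerivAt_sinh r
      have hder : HasDerivAt F
          ((2 * φ r ^ 1 * deriv φ r) * (Real.cosh r * Real.sinh r^(m+1)) +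
            (φ r)^2 * (Real.sinh r * Real.sinh r^(m+1) +
              Real.cosh r * (((m:ℝ)+1) * Real.sinh r ^ m * Real.cosh r))) r := by
        have hp : HasDerivAt (fun x => Real.sinh x ^ (m+1))
            (((m:ℝ)+1) * Real.sinh r ^ m * Real.cosh r) r := by
          simpa using h3.fun_pow (m+1)
        exact (h1.pow 2).mul (h2.mul hp)
      rw [hder.deriv]
      ring
    have hFTC : (∫ r in Ioi (0:ℝ), deriv F r) = 0 := by
      rw [hFc.integral_Ioi_deriv_eq hF1 0, hF0, neg_zero]
    have hsplit : (∫ r in Ioi (0:ℝ), deriv F r) = 2 * I + S + ((m:ℝ)+1) * C := by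
      have hcongr : (∫ r in Ioi (0:ℝ), deriv F r) =
          (∫ r in Ioi (0:ℝ), 2 * (φ r * deriv φ r * Real.cosh r * Real.sinh r^(m+1)) +
            ((φ r)^2 * Real.sinh r^(m+2) +
              ((m:ℝ)+1) * ((φ r)^2 * Real.cosh r^2 * Real.sinh r^m))) :=
        setIntegral_congr_fun measurableSet_Ioi (fun r _ => hd r)
      rw [hcongr, split3 _ _ _ (hIntI.const_mul 2) hIntS (hIntC.const_mul ((m:ℝ)+1)),
        integral_const_mul, integral_const_mul]
      ring
    rw [← hsplit, hFTC]
  -- pointwise square inequality integrated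
  have hSQ : 0 ≤ D + 2 * a * I + a^2 * C := by
    have key : 0 ≤ ∫ r in Ioi (0:ℝ),
        ((deriv φ r)^2 * (Real.sinh r)^(m+2) +
          (2 * a * (φ r * deriv φ r * Real.cosh r * (Real.sinh r)^(m+1)) +
           a^2 * ((φ r)^2 * Real.cosh r^2 * (Real.sinh r)^m))) := by
      apply setIntegral_nonneg measurableSet_Ioi
      intro r hr
      have hs : 0 ≤ Real.sinh r := (Real.sinh_pos_iff.mpr hr).le
      have : (deriv φ r)^2 * (Real.sinh r)^(m+2) +
          (2 * a * (φ r * deriv φ r * Real.cosh r * (Real.sinh r)^(m+1)) +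
           a^2 * ((φ r)^2 * Real.cosh r^2 * (Real.sinh r)^m)) =
          (deriv φ r * Real.sinh r + a * φ r * Real.cosh r)^2 * (Real.sinh r)^m := by
        ring
      rw [this]
      exact mul_nonneg (sq_nonneg _) (pow_nonneg hs m)
    rw [split3 _ _ _ hIntD (hIntI.const_mul (2*a)) (hIntC.const_mul (a^2)),
      integral_const_mul, integral_const_mul] at key
    linarith
  have hm : (m:ℝ)+1 = 2*a := by rw [ha]; ring
  rw [hm] at hIBP
  nlinarith [hSQ, hIBP, hCeq]

theorem stmt_19 (n : ℕ) (hn : 2 ≤ n) (φ : ℝ → ℝ) (hφ : ContDiff ℝ (⊤ : ℕ∞) φ)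
    (hφc : HasCompactSupport φ) (hφs : tsupport φ ⊆ Ioi 0) :
    (∀ κ : ℝ,
      (∫ r in Ioi (0:ℝ), (deriv φ r)^2 * (Real.sinh r)^n) +
          κ * (∫ r in Ioi (0:ℝ), (φ r)^2 * (Real.sinh r)^(n-2)) ≥
        (((n:ℝ)-1)^2/4) * (∫ r in Ioi (0:ℝ), (φ r)^2 * (Real.sinh r)^n) +
          (κ + ((n:ℝ)-1)^2/4) * (∫ r in Ioi (0:ℝ), (φ r)^2 * (Real.sinh r)^(n-2))) ∧
    (∀ κ : ℝ, κ ≥ -((n:ℝ)-1)^2/4 →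
      (∫ r in Ioi (0:ℝ), (deriv φ r)^2 * (Real.sinh r)^n) +
          κ * (∫ r in Ioi (0:ℝ), (φ r)^2 * (Real.sinh r)^(n-2)) ≥
        (((n:ℝ)-1)^2/4) * (∫ r in Ioi (0:ℝ), (φ r)^2 * (Real.sinh r)^n)) := by
  obtain ⟨m, rfl⟩ : ∃ m, n = m + 2 := ⟨n - 2, by omega⟩
  have key := aux_key m φ hφ hφc hφs
  have hnc : ((m+2:ℕ):ℝ) - 1 = (m:ℝ) + 1 := by push_cast; ring
  have hsub : m + 2 - 2 = m := by omega
  rw [hsub]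
  have split3 : ∀ f g h : ℝ → ℝ, IntegrableOn f (Ioi 0) → IntegrableOn g (Ioi 0) →
      IntegrableOn h (Ioi 0) →
      (∫ r in Ioi (0:ℝ), (f r + (g r + h r))) =
        (∫ r in Ioi (0:ℝ), f r) + ((∫ r in Ioi (0:ℝ), g r) + (∫ r in Ioi (0:ℝ), h r)) := by
    intro f g h hf hg hh
    have hgh : IntegrableOn (fun r => g r + h r) (Ioi 0) := hg.add hh
    rw [integral_add hf hgh, integral_add hg hh]
  set D := ∫ r in Ioi (0:ℝ), (deriv φ r)^2 * (Real.sinh r)^(m+2) with hD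
  set S := ∫ r in Ioi (0:ℝ), (φ r)^2 * (Real.sinh r)^(m+2) with hS
  set C2 := ∫ r in Ioi (0:ℝ), (φ r)^2 * (Real.sinh r)^m with hC2
  have hSnn : 0 ≤ S := by
    apply setIntegral_nonneg measurableSet_Ioi
    intro r hr
    exact mul_nonneg (sq_nonneg _) (pow_nonneg (Real.sinh_pos_iff.mpr hr).le _)
  have hC2nn : 0 ≤ C2 := by
    apply setIntegral_nonneg measurableSet_Ioi
    intro r hr
    exact mul_nonneg (sq_nonneg _) (pow_nonneg (Real.sinh_pos_iff.mpr hr).le _)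
  have ha : 0 ≤ ((m:ℝ)+1)/2 := by positivity
  rw [hnc]
  have hsq : ((m:ℝ)+1)^2/4 = (((m:ℝ)+1)/2)^2 := by ring
  constructor
  · intro κ
    rw [ge_iff_le, hsq]
    nlinarith [key, mul_nonneg ha hSnn]
  · intro κ hκ
    rw [ge_iff_le, hsq]
    have h1 : 0 ≤ κ + ((m:ℝ)+1)^2/4 := by linarith
    nlinarith [key, mul_nonneg ha hSnn, mul_nonneg h1 hC2nn]
end
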